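/- Let n ≥ 2 and let 1 = a_0 ≤ a_1 ≤ … ≤ a_{n+1} be positive integer weights, and let c_1 = #{i : a_i = 1}. Let q ∈ ℂ^{n+2} be a vector such that not all of q_0, q_1, …, q_{c_1−1} are zero, and not all of q_1, q_2, …, q_n are zero. Then there exists a weighted homogeneous polynomial G ∈ ℂ[z_0,…,z_{n+1}] of degree a_n with G(e_0) = 0 and G(q) ≠ 0. -/
import Mathlib


open MvPolynomial

/-- Let `n ≥ 2`, let `1 = a_0 ≤ a_1 ≤ … ≤ a_{n+1}` be weights
and `c_1 = #{i : a_i = 1}`.  If `q ∈ ℂ^{n+2}` is such that not all of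
`q_0, …, q_{c_1−1}` vanish and not all of `q_1, …, q_n` vanish, then there is a
weighted homogeneous polynomial `G` of degree `a_n` with `G(e_0) = 0` and
`G(q) ≠ 0`. -/
theorem base_locus_second_degree (n : ℕ) (hn : 2 ≤ n) (a : Fin (n + 2) → ℕ)
    (ha0 : a ⟨0, by omega⟩ = 1) (ha_mono : Monotone a)
    (c1 : ℕ) (hc1 : c1 = (Finset.univ.filter (fun i : Fin (n + 2) => a i = 1)).card)
    (q : Fin (n + 2) → ℂ)
    (hq1 : ∃ i : Fin (n + 2), (i : ℕ) < c1 ∧ q i ≠ 0)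
    (hq2 : ∃ i : Fin (n + 2), 1 ≤ (i : ℕ) ∧ (i : ℕ) ≤ n ∧ q i ≠ 0) :
    ∃ G : MvPolynomial (Fin (n + 2)) ℂ,
      (∀ m ∈ G.support, ∑ i, m i * a i = a ⟨n, by omega⟩) ∧
      eval (Pi.single ⟨0, by omega⟩ 1 : Fin (n + 2) → ℂ) G = 0 ∧
      eval q G ≠ 0 := by
  obtain ⟨j, hjc, hqj⟩ := hq1
  obtain ⟨i, hi1, hin, hqi⟩ := hq2
  -- a j = 1 since j < c1
  have haj : a j = 1 := by
    by_contra h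
    have h2 : 2 ≤ a j := by
      have := ha_mono (show (⟨0, by omega⟩ : Fin (n+2)) ≤ j by simp [Fin.le_def])
      omega
    have hsub : (Finset.univ.filter (fun i : Fin (n + 2) => a i = 1)) ⊆ Finset.Iio j := by
      intro k hk
      simp only [Finset.mem_filter] at hk
      simp only [Finset.mem_Iio]
      by_contra hkj
      push_neg at hkj
      have := ha_mono hkj
      omega
    have := Finset.card_le_card hsub
    rw [Fin.card_Iio] at this
    omega
  -- degree bound
  have hain : a i ≤ a ⟨n, by omega⟩ := ha_mono (by simp [Fin.le_def]; omega)
  set e : ℕ := a ⟨n, by omega⟩ - a i with he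
  set m : Fin (n + 2) →₀ ℕ := Finsupp.single i 1 + Finsupp.single j e with hm
  have hmi : 1 ≤ m i := by
    simp only [hm, Finsupp.add_apply, Finsupp.single_apply]
    split_ifs <;> omega
  refine ⟨monomial m 1, ?_, ?_, ?_⟩
  · intro m' hm'
    have : m' = m := by
      rw [MvPolynomial.support_monomial] at hm'
      simpa [one_ne_zero] using hm'
    subst this
    have : ∑ k, m k * a k = (∑ k, (Finsupp.single i 1) k * a k)
        + ∑ k, (Finsupp.single j e) k * a k := by
      rw [← Finset.sum_add_distrib]
      simp [hm, add_mul]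
    rw [this]
    have h1 : ∑ k, (Finsupp.single i 1) k * a k = a i := by
      simp [Finsupp.single_apply, ite_mul, Finset.sum_ite_eq]
    have h2 : ∑ k, (Finsupp.single j e) k * a k = e := by
      simp [Finsupp.single_apply, ite_mul, Finset.sum_ite_eq, haj]
    rw [h1, h2]
    omega
  · rw [eval_monomial]
    have hi0 : (Pi.single (⟨0, by omega⟩ : Fin (n+2)) 1 : Fin (n+2) → ℂ) i = 0 := by
      apply Pi.single_eq_of_ne
      intro h
      rw [h] at hi1
      simp at hi1
    have himem : i ∈ m.support := by
      rw [Finsupp.mem_support_iff]; omega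
    rw [Finsupp.prod]
    rw [Finset.prod_eq_zero himem]
    · ring
    · rw [hi0, zero_pow]; omega
  · rw [eval_monomial]
    rw [Finsupp.prod]
    simp only [one_mul]
    rw [Finset.prod_ne_zero_iff]
    intro k hk
    apply pow_ne_zero
    rw [Finsupp.mem_support_iff] at hk
    have : k = i ∨ k = j := by
      by_contra h
      push_neg at h
      simp [hm, Finsupp.single_apply, Ne.symm h.1, Ne.symm h.2] at hk
    rcases this with rfl | rfl <;> assumption
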